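/- arXiv:1305.5303 — 5 statements merged into one kernel-verified Lean document; each statement's English description precedes it below -/
import Mathlib

section
/- Let H ⊆ ℝ^m be a linear subspace, p ∈ ℝ^m_{>0}, and P = (p + H) ∩ ℝ^m_{≥0}. Suppose x(n) is a sequence in the relative interior of P, u ∈ ℝ^m is a unit vector such that the support of the negative part u⁻ is contained in the set of indices i where x(n)_i → 0, the support of the positive part u⁺ is contained in the set of indices i where x(n)_i → +∞, and every other coordinate of x(n) converges to a finite positive limit. Then u ∉ H^⊥. -/
/-!
Write `u = u⁺ - u⁻`. If `u ∈ Hᗮ`, then `⟪u, x n⟫ = ⟪u, p⟫` for every `n`, since `x n - p ∈ H`.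
The coordinates of `x n` are nonnegative and tend to `0` on the support of `u⁻`, so
`⟪u⁻, x n⟫ → 0`. If `u` has a positive coordinate `j`, then `⟪u⁺, x n⟫ ≥ u j * x n j → ∞`,
so the constant `⟪u, x n⟫` tends to `+∞`, which is absurd. Otherwise `u = -u⁻ ≠ 0`, so
`⟪u, x n⟫ → 0` forces `⟪u, p⟫ = 0`, whereas `⟪u, p⟫ < 0` because `p` is strictly positive.
-/

open scoped RealInnerProductSpace
open Filter Topology

theorem inner_eq_inner_of_sub_mem_of_mem_orthogonal {E : Type*} [NormedAddCommGroup E]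
    [InnerProductSpace ℝ E] {H : Submodule ℝ E} {u x p : E} (hu : u ∈ Hᗮ) (hx : x - p ∈ H) :
    ⟪u, x⟫ = ⟪u, p⟫ := by
  rw [← sub_eq_zero, ← inner_sub_right, real_inner_comm]
  exact Submodule.inner_right_of_mem_orthogonal hx hu

theorem EuclideanSpace.real_inner_eq_sum_mul {ι : Type*} [Fintype ι] (u x : EuclideanSpace ℝ ι) :
    ⟪u, x⟫ = ∑ i, u i * x i := by
  simp [PiLp.inner_apply, mul_comm]

section Coordinatewise

variable {ι : Type*} [Fintype ι] {u : ι → ℝ} {x : ℕ → ι → ℝ}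

theorem sum_mul_eq_sum_posPart_mul_sub_sum_negPart_mul (u y : ι → ℝ) :
    ∑ i, u i * y i = ∑ i, (u i)⁺ * y i - ∑ i, (u i)⁻ * y i := by
  rw [← Finset.sum_sub_distrib]
  simp only [← sub_mul, posPart_sub_negPart]

theorem tendsto_sum_negPart_mul_nhds_zero
    (hneg : ∀ i, u i < 0 → Tendsto (fun n => x n i) atTop (𝓝 0)) :
    Tendsto (fun n => ∑ i, (u i)⁻ * x n i) atTop (𝓝 0) := by
  have hterm : ∀ i, Tendsto (fun n => (u i)⁻ * x n i) atTop (𝓝 0) := fun i => by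
    rcases lt_or_ge (u i) 0 with hi | hi
    · simpa using (hneg i hi).const_mul (u i)⁻
    · simp [negPart_eq_zero.mpr hi]
  simpa using tendsto_finsetSum Finset.univ fun i _ => hterm i

theorem tendsto_sum_posPart_mul_atTop (hx : ∀ n i, 0 ≤ x n i) {j : ι} (hj : 0 < u j)
    (hxj : Tendsto (fun n => x n j) atTop atTop) :
    Tendsto (fun n => ∑ i, (u i)⁺ * x n i) atTop atTop := by
  refine tendsto_atTop_mono (fun n => ?_) (hxj.const_mul_atTop hj)
  calc u j * x n j = (u j)⁺ * x n j := by rw [posPart_eq_self.mpr hj.le]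
    _ ≤ ∑ i, (u i)⁺ * x n i :=
      Finset.single_le_sum (fun i _ => mul_nonneg (posPart_nonneg _) (hx n i)) (Finset.mem_univ j)

theorem tendsto_sum_mul_atTop_of_pos (hx : ∀ n i, 0 ≤ x n i)
    (hneg : ∀ i, u i < 0 → Tendsto (fun n => x n i) atTop (𝓝 0)) {j : ι} (hj : 0 < u j)
    (hxj : Tendsto (fun n => x n j) atTop atTop) :
    Tendsto (fun n => ∑ i, u i * x n i) atTop atTop := by
  refine ((tendsto_sum_posPart_mul_atTop hx hj hxj).atTop_add
    (tendsto_sum_negPart_mul_nhds_zero hneg).neg).congr fun n => ?_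
  rw [← sub_eq_add_neg, ← sum_mul_eq_sum_posPart_mul_sub_sum_negPart_mul]

theorem tendsto_sum_mul_nhds_zero_of_nonpos (hu : ∀ i, u i ≤ 0)
    (hneg : ∀ i, u i < 0 → Tendsto (fun n => x n i) atTop (𝓝 0)) :
    Tendsto (fun n => ∑ i, u i * x n i) atTop (𝓝 0) := by
  have h := (tendsto_sum_negPart_mul_nhds_zero hneg).neg
  rw [neg_zero] at h
  refine h.congr fun n => ?_
  simp [sum_mul_eq_sum_posPart_mul_sub_sum_negPart_mul u (x n), posPart_eq_zero.mpr (hu _)]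

theorem sum_mul_neg_of_nonpos_of_pos (hu : ∀ i, u i ≤ 0) (hu0 : u ≠ 0) {p : ι → ℝ}
    (hp : ∀ i, 0 < p i) : ∑ i, u i * p i < 0 := by
  obtain ⟨j, hj⟩ := Function.ne_iff.mp hu0
  simpa using Finset.sum_lt_sum (g := 0) (fun i _ => mul_nonpos_of_nonpos_of_nonneg (hu i) (hp i).le)
    ⟨j, Finset.mem_univ j, mul_neg_of_neg_of_pos ((hu j).lt_of_ne hj) (hp j)⟩

end Coordinatewise

theorem outer_normal_cone_meets_Hperp_trivially_general {m : ℕ}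
    (H : Submodule ℝ (EuclideanSpace ℝ (Fin m)))
    (p : EuclideanSpace ℝ (Fin m)) (hp : ∀ i, 0 < p i)
    (x : ℕ → EuclideanSpace ℝ (Fin m))
    (hxpos : ∀ n, ∀ i, 0 < x n i)
    (hxH : ∀ n, x n - p ∈ H)
    (u : EuclideanSpace ℝ (Fin m)) (hu : ‖u‖ = 1)
    (hneg : ∀ i, u i < 0 → Tendsto (fun n => x n i) atTop (nhds 0))
    (hpos : ∀ i, 0 < u i → Tendsto (fun n => x n i) atTop atTop) :
    u ∉ Hᗮ := by
  intro hmem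
  have hconst : (fun n => ∑ i, u i * x n i) = fun _ => ∑ i, u i * p i := by
    ext n
    simpa only [EuclideanSpace.real_inner_eq_sum_mul] using
      inner_eq_inner_of_sub_mem_of_mem_orthogonal hmem (hxH n)
  by_cases hj : ∃ j, 0 < u j
  · obtain ⟨j, hj⟩ := hj
    have htop := tendsto_sum_mul_atTop_of_pos (fun n i => (hxpos n i).le) hneg hj (hpos j hj)
    exact not_tendsto_const_atTop _ _ (hconst ▸ htop)
  · push Not at hj
    have hu0 : (u : Fin m → ℝ) ≠ 0 := fun h => by simp_all
    have hlim := tendsto_sum_mul_nhds_zero_of_nonpos hj hneg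
    rw [hconst, tendsto_const_nhds_iff] at hlim
    exact (sum_mul_neg_of_nonpos_of_pos hj hu0 hp).ne hlim

/-- if a sequence in the relative interior of `P = (p + H) ∩ ℝ^m_{≥0}`
has coordinates tending to `0` exactly where a unit vector `u` is negative, to `+∞`
where `u` is positive, and to finite positive limits elsewhere, then `u ∉ H^⊥`. -/
theorem outer_normal_cone_meets_Hperp_trivially {m : ℕ}
    (H : Submodule ℝ (EuclideanSpace ℝ (Fin m)))
    (p : EuclideanSpace ℝ (Fin m)) (hp : ∀ i, 0 < p i)
    (x : ℕ → EuclideanSpace ℝ (Fin m))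
    (hxpos : ∀ n, ∀ i, 0 < x n i)
    (hxH : ∀ n, x n - p ∈ H)
    (u : EuclideanSpace ℝ (Fin m)) (hu : ‖u‖ = 1)
    (hneg : ∀ i, u i < 0 → Tendsto (fun n => x n i) atTop (nhds 0))
    (hpos : ∀ i, 0 < u i → Tendsto (fun n => x n i) atTop atTop)
    (hzero : ∀ i, u i = 0 → ∃ L : ℝ, 0 < L ∧ Tendsto (fun n => x n i) atTop (nhds L)) :
    u ∉ Hᗮ :=
  outer_normal_cone_meets_Hperp_trivially_general H p hp x hxpos hxH u hu hneg hpos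
end

section
/- Fix a frame (w_1,…,w_ℓ) in ℝ^n, a unit jet (w(i)) framed by it, and a finite set Q ⊆ ℝ^n. Define Super_0 = Q and Super_j = the set of ⟨w_j,·⟩-maximal elements of Super_{j−1} for j = 1,…,ℓ. If λ ∈ {1,…,ℓ}, x ∈ Super_λ, and y ∈ Q \ Super_λ, then there exists k ∈ {1,…,λ} such that ⟨w_k, x−y⟩ > 0 and ⟨w_j, x−y⟩ = 0 for all j < k; consequently ⟨w(i), x−y⟩ > 0 for all sufficiently large i. -/
open Filter Finset

/-- The standard dot product on `Fin n → ℝ`. -/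
def dotp {n : ℕ} (w x : Fin n → ℝ) : ℝ := ∑ i, w i * x i

/-- The set of `⟨w,·⟩`-maximal elements of a set `S`. -/
def maximalOn {n : ℕ} (w : Fin n → ℝ) (S : Set (Fin n → ℝ)) : Set (Fin n → ℝ) :=
  {x ∈ S | ∀ y ∈ S, dotp w y ≤ dotp w x}

/-- `superSeq w Q j` is `Super_j`: `Super_0 = Q` and
`Super_{j+1}` is the `⟨w_{j+1},·⟩`-maximal subset of `Super_j`
(the frame is indexed starting at `1`). -/
def superSeq {n : ℕ} (w : ℕ → Fin n → ℝ) (Q : Set (Fin n → ℝ)) : ℕ → Set (Fin n → ℝ)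
  | 0 => Q
  | j + 1 => maximalOn (w (j + 1)) (superSeq w Q j)

lemma dotp_sub {n : ℕ} (w x y : Fin n → ℝ) : dotp w (x - y) = dotp w x - dotp w y := by
  simp [dotp, mul_sub, Finset.sum_sub_distrib]

lemma dotp_sum_smul {n : ℕ} (s : Finset ℕ) (c : ℕ → ℝ) (w : ℕ → Fin n → ℝ) (z : Fin n → ℝ) :
    dotp (∑ j ∈ s, c j • w j) z = ∑ j ∈ s, c j * dotp (w j) z := by
  simp only [dotp, Finset.sum_apply, Pi.smul_apply, smul_eq_mul, Finset.sum_mul, Finset.mul_sum]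
  rw [Finset.sum_comm]
  exact Finset.sum_congr rfl fun j _ => Finset.sum_congr rfl fun i _ => by ring

lemma superSeq_mono {n : ℕ} (w : ℕ → Fin n → ℝ) (Q : Set (Fin n → ℝ)) :
    ∀ {a b : ℕ}, a ≤ b → superSeq w Q b ⊆ superSeq w Q a := by
  intro a b h
  induction b with
  | zero => simp_all
  | succ b ih =>
    rcases Nat.lt_or_ge a (b+1) with h' | h'
    · exact fun z hz => ih (Nat.lt_succ_iff.mp h') hz.1
    · have : a = b + 1 := le_antisymm h h'
      subst this; exact fun z hz => hz

lemma superSeq_succ {n : ℕ} (w : ℕ → Fin n → ℝ) (Q : Set (Fin n → ℝ)) (m : ℕ) :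
    superSeq w Q (m + 1) = maximalOn (w (m + 1)) (superSeq w Q m) := rfl

/-- given a frame `(w_1, …, w_ℓ)`, a unit jet `(v i)` framed by it, and a
finite set `Q`, if `x ∈ Super_λ` and `y ∈ Q \ Super_λ`, then some `k ≤ λ` has
`⟨w_k, x−y⟩ > 0` while `⟨w_j, x−y⟩ = 0` for `j < k`; consequently `⟨v i, x−y⟩ > 0`
for large `i`. -/
theorem jet_separates_super {n ℓ : ℕ} (hℓ : 0 < ℓ)
    (w : ℕ → Fin n → ℝ)
    (hw1 : ∀ j, 1 ≤ j → j ≤ ℓ → ∑ i, w j i ^ 2 = 1)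
    (hw2 : ∀ j j', 1 ≤ j → j ≤ ℓ → 1 ≤ j' → j' ≤ ℓ → j ≠ j' → dotp (w j) (w j') = 0)
    (β : ℕ → ℕ → ℝ)
    (v : ℕ → Fin n → ℝ)
    (hv : ∀ i, v i = ∑ j ∈ Finset.Icc 1 ℓ, β i j • w j)
    (hunit : ∀ i, ∑ c, v i c ^ 2 = 1)
    (hβpos : ∀ i j, 1 ≤ j → j ≤ ℓ → 0 < β i j)
    (hratio : ∀ j, 1 ≤ j → j < ℓ → Tendsto (fun i => β i j / β i (j + 1)) atTop atTop)
    (Q : Set (Fin n → ℝ)) (hQ : Q.Finite)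
    (lam : ℕ) (hlam1 : 1 ≤ lam) (hlam2 : lam ≤ ℓ)
    (x y : Fin n → ℝ) (hx : x ∈ superSeq w Q lam) (hy : y ∈ Q) (hy' : y ∉ superSeq w Q lam) :
    (∃ k, 1 ≤ k ∧ k ≤ lam ∧ 0 < dotp (w k) (x - y) ∧
      ∀ j, 1 ≤ j → j < k → dotp (w j) (x - y) = 0) ∧
    ∃ N, ∀ i ≥ N, 0 < dotp (v i) (x - y) := by
  classical
  have hP : ∃ m, y ∉ superSeq w Q m := ⟨lam, hy'⟩
  set k := Nat.find hP with hkdef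
  have hkspec : y ∉ superSeq w Q k := Nat.find_spec hP
  have hkmin : ∀ m, m < k → y ∈ superSeq w Q m := fun m hm => by
    by_contra h; exact Nat.find_min hP hm h
  have hklam : k ≤ lam := Nat.find_le hy'
  have hk1 : 1 ≤ k := by
    rcases Nat.eq_zero_or_pos k with h0 | h0
    · exfalso; apply hkspec; rw [h0]; exact hy
    · exact h0
  have hkl : k ≤ ℓ := le_trans hklam hlam2
  -- y ∈ Super_{k-1}
  have hy_pred : y ∈ superSeq w Q (k - 1) := hkmin _ (Nat.sub_lt hk1 one_pos)
  have hkeq : k = (k - 1) + 1 := (Nat.succ_pred_eq_of_pos hk1).symm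
  -- x ∈ Super_k
  have hxk : x ∈ superSeq w Q k := superSeq_mono w Q hklam hx
  -- key positivity at k
  have hdk : 0 < dotp (w k) (x - y) := by
    have hxk' : x ∈ maximalOn (w k) (superSeq w Q (k - 1)) := by
      rw [hkeq, superSeq_succ] at hxk; rwa [← hkeq] at hxk
    have hyk' : y ∉ maximalOn (w k) (superSeq w Q (k - 1)) := by
      rw [hkeq, superSeq_succ] at hkspec; rwa [← hkeq] at hkspec
    have : ¬ ∀ z ∈ superSeq w Q (k - 1), dotp (w k) z ≤ dotp (w k) y := by
      intro h; exact hyk' ⟨hy_pred, h⟩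
    push_neg at this
    obtain ⟨z, hz, hz'⟩ := this
    have hzx : dotp (w k) z ≤ dotp (w k) x := hxk'.2 z hz
    rw [dotp_sub]; linarith
  -- zeros below k
  have hdj : ∀ j, 1 ≤ j → j < k → dotp (w j) (x - y) = 0 := by
    intro j hj1 hjk
    have hjl : j ≤ lam := le_trans (le_of_lt hjk) hklam
    have hxj : x ∈ superSeq w Q j := superSeq_mono w Q hjl hx
    have hyj : y ∈ superSeq w Q j := hkmin _ hjk
    have hjeq : j = (j - 1) + 1 := (Nat.succ_pred_eq_of_pos hj1).symm
    rw [hjeq, superSeq_succ] at hxj hyj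
    have h1 : dotp (w j) y ≤ dotp (w j) x := by
      have := hxj.2 y hyj.1; rwa [← hjeq] at this
    have h2 : dotp (w j) x ≤ dotp (w j) y := by
      have := hyj.2 x hxj.1; rwa [← hjeq] at this
    rw [dotp_sub]; linarith
  refine ⟨⟨k, hk1, hklam, hdk, hdj⟩, ?_⟩
  -- Part 2
  set d : ℕ → ℝ := fun j => dotp (w j) (x - y) with hd
  -- ratio tends to 0 for j > k
  have ratio0 : ∀ j, k < j → j ≤ ℓ → Tendsto (fun i => β i j / β i k) atTop (nhds 0) := by
    have base : ∀ m, 1 ≤ m → m < ℓ → Tendsto (fun i => β i (m+1) / β i m) atTop (nhds 0) := by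
      intro m hm1 hm2
      have h := (hratio m hm1 hm2).inv_tendsto_atTop
      exact h.congr fun i => by rw [Pi.inv_apply, inv_div]
    intro j hj
    induction j with
    | zero => omega
    | succ j ih =>
      intro hjl
      rcases Nat.lt_or_ge k j with hlt | hge
      · have hj1 : 1 ≤ j := by omega
        have hjl' : j < ℓ := by omega
        have h1 := base j hj1 hjl'
        have h2 := ih hlt (by omega)
        have := h1.mul h2
        rw [mul_zero] at this
        refine this.congr fun i => ?_
        have hne : β i j ≠ 0 := (hβpos i j hj1 (by omega)).ne'
        rw [div_mul_div_comm, mul_comm (β i (j+1)) (β i j), mul_div_mul_left _ _ hne]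
      · have : j = k := by omega
        subst this
        exact base k hk1 (by omega)
  -- expansion of dotp (v i) (x - y)
  have hexp : ∀ i, dotp (v i) (x - y) = ∑ j ∈ Finset.Icc 1 ℓ, β i j * d j := by
    intro i; rw [hv i, dotp_sum_smul]
  have hβk : ∀ i, 0 < β i k := fun i => hβpos i k hk1 hkl
  -- limit of normalized sum
  have hT : Tendsto (fun i => ∑ j ∈ Finset.Icc 1 ℓ, (β i j / β i k) * d j) atTop (nhds (d k)) := by
    have key : ∀ j ∈ Finset.Icc 1 ℓ, Tendsto (fun i => (β i j / β i k) * d j) atTop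
        (nhds (if j = k then d k else 0)) := by
      intro j hj
      simp only [Finset.mem_Icc] at hj
      rcases lt_trichotomy j k with h | h | h
      · have : d j = 0 := hdj j hj.1 h
        simp only [this, mul_zero]
        split <;> [omega; exact tendsto_const_nhds]
      · rw [h]
        simp only [if_pos rfl]
        have : (fun i => (β i k / β i k) * d k) = fun _ => d k := by
          funext i; rw [div_self (ne_of_gt (hβk i)), one_mul]
        rw [this]; exact tendsto_const_nhds
      · have := (ratio0 j h hj.2).mul_const (d j)
        rw [zero_mul] at this
        simpa [if_neg (by omega : j ≠ k)] using this
    have := tendsto_finset_sum (Finset.Icc 1 ℓ) key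
    have hsum : ∑ j ∈ Finset.Icc 1 ℓ, (if j = k then d k else 0) = d k := by
      rw [Finset.sum_ite_eq' (Finset.Icc 1 ℓ) k (fun _ => d k)]
      simp [Finset.mem_Icc, hk1, hkl]
    rwa [hsum] at this
  have hev : ∀ᶠ i in atTop, 0 < ∑ j ∈ Finset.Icc 1 ℓ, (β i j / β i k) * d j :=
    hT.eventually (eventually_gt_nhds hdk)
  rw [eventually_atTop] at hev
  obtain ⟨N, hN⟩ := hev
  refine ⟨N, fun i hi => ?_⟩
  have h1 := hN i hi
  have h2 : ∑ j ∈ Finset.Icc 1 ℓ, (β i j / β i k) * d j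
      = (∑ j ∈ Finset.Icc 1 ℓ, β i j * d j) / β i k := by
    rw [Finset.sum_div]
    exact Finset.sum_congr rfl fun j _ => by ring
  rw [h2, div_pos_iff] at h1
  rw [hexp i]
  rcases h1 with ⟨h, _⟩ | ⟨_, h⟩
  · exact h
  · exact absurd (hβk i) (not_lt.mpr (le_of_lt h))
end

section
/- Fix a frame (w_1,…,w_ℓ) in ℝ^n and a finite nonempty set Q ⊆ ℝ^n. Define Super_0 = Q and Super_j = the ⟨w_j,·⟩-maximal subset of Super_{j−1}. Then there exist positive real numbers β_1,…,β_ℓ such that the set of ⟨w̃,·⟩-maximal elements of Q equals Super_ℓ, where w̃ = β_1 w_1 + ⋯ + β_ℓ w_ℓ. Moreover, given arbitrary γ_2,…,γ_ℓ > 0, the β_j can be chosen so that β_j < γ_j β_{j−1} for all j = 2,…,ℓ. -/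
open Finset

lemma dotp_sum_left {n : ℕ} (s : Finset ℕ) (β : ℕ → ℝ) (w : ℕ → Fin n → ℝ) (x : Fin n → ℝ) :
    dotp (∑ j ∈ s, β j • w j) x = ∑ j ∈ s, β j * dotp (w j) x := by
  simp only [dotp, Finset.sum_apply, Pi.smul_apply, smul_eq_mul, Finset.sum_mul,
    Finset.mul_sum, mul_assoc]
  exact Finset.sum_comm

lemma superSeq_subset {n : ℕ} (w : ℕ → Fin n → ℝ) (Q : Set (Fin n → ℝ)) :
    ∀ j, superSeq w Q j ⊆ Q
  | 0 => subset_rfl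
  | j + 1 => fun x hx => superSeq_subset w Q j hx.1

lemma superSeq_subset_of_le {n : ℕ} (w : ℕ → Fin n → ℝ) (Q : Set (Fin n → ℝ))
    {j j' : ℕ} (h : j ≤ j') : superSeq w Q j' ⊆ superSeq w Q j := by
  induction j' with
  | zero => simp_all
  | succ m ih =>
    rcases Nat.lt_or_ge j (m + 1) with hlt | hge
    · exact fun x hx => ih (Nat.lt_succ_iff.mp hlt) hx.1
    · have : j = m + 1 := le_antisymm h hge
      subst this; exact subset_rfl

lemma superSeq_nonempty {n : ℕ} (w : ℕ → Fin n → ℝ) (Q : Set (Fin n → ℝ))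
    (hQfin : Q.Finite) (hQne : Q.Nonempty) : ∀ j, (superSeq w Q j).Nonempty := by
  intro j
  induction j with
  | zero => exact hQne
  | succ m ih =>
    obtain ⟨b, hb, hmax⟩ := Set.exists_max_image (superSeq w Q m) (dotp (w (m + 1)))
      (hQfin.subset (superSeq_subset w Q m)) ih
    exact ⟨b, hb, hmax⟩

lemma superSeq_dotp_eq {n : ℕ} (w : ℕ → Fin n → ℝ) (Q : Set (Fin n → ℝ)) {j : ℕ}
    {x y : Fin n → ℝ} (hx : x ∈ superSeq w Q (j + 1)) (hy : y ∈ superSeq w Q (j + 1)) :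
    dotp (w (j + 1)) x = dotp (w (j + 1)) y :=
  le_antisymm (hy.2 x hx.1) (hx.2 y hy.1)

/-- for a frame `(w_1, …, w_ℓ)` and a finite nonempty `Q`, there exist
positive `β_1, …, β_ℓ`, which may be chosen with `β_j < γ_j β_{j-1}` for any
prescribed positive `γ_j`, such that the `⟨w̃,·⟩`-maximal subset of `Q` equals
`Super_ℓ`, where `w̃ = β_1 w_1 + ⋯ + β_ℓ w_ℓ`. -/
theorem super_is_maximal_for_positive_combination {n ℓ : ℕ} (hℓ : 0 < ℓ)
    (w : ℕ → Fin n → ℝ)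
    (hw1 : ∀ j, 1 ≤ j → j ≤ ℓ → ∑ i, w j i ^ 2 = 1)
    (hw2 : ∀ j j', 1 ≤ j → j ≤ ℓ → 1 ≤ j' → j' ≤ ℓ → j ≠ j' → dotp (w j) (w j') = 0)
    (Q : Set (Fin n → ℝ)) (hQfin : Q.Finite) (hQne : Q.Nonempty)
    (γ : ℕ → ℝ) (hγ : ∀ j, 2 ≤ j → j ≤ ℓ → 0 < γ j) :
    ∃ β : ℕ → ℝ,
      (∀ j, 1 ≤ j → j ≤ ℓ → 0 < β j) ∧
      (∀ j, 2 ≤ j → j ≤ ℓ → β j < γ j * β (j - 1)) ∧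
      maximalOn (∑ j ∈ Finset.Icc 1 ℓ, β j • w j) Q = superSeq w Q ℓ := by
  classical
  -- Step 1: obtain gap ε and bound C
  obtain ⟨ε, C, hεpos, hC0, hεle, hCle⟩ :
      ∃ ε C : ℝ, 0 < ε ∧ 0 ≤ C ∧
        (∀ k, 1 ≤ k → k ≤ ℓ → ∀ x ∈ Q, ∀ y ∈ Q,
          dotp (w k) y < dotp (w k) x → ε ≤ dotp (w k) x - dotp (w k) y) ∧
        (∀ k, 1 ≤ k → k ≤ ℓ → ∀ x ∈ Q, ∀ y ∈ Q, dotp (w k) x - dotp (w k) y ≤ C) := by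
    set Qf := hQfin.toFinset with hQf
    have hQfne : Qf.Nonempty := by rwa [hQf, Set.Finite.toFinset_nonempty]
    set P : Finset ℝ := ((Finset.Icc 1 ℓ) ×ˢ Qf ×ˢ Qf).image
        (fun p => dotp (w p.1) p.2.1 - dotp (w p.1) p.2.2) with hP
    have hPne : P.Nonempty :=
      Finset.Nonempty.image
        (Finset.Nonempty.product (Finset.nonempty_Icc.mpr hℓ) (hQfne.product hQfne)) _
    have hmemP : ∀ k, 1 ≤ k → k ≤ ℓ → ∀ x ∈ Q, ∀ y ∈ Q,
        dotp (w k) x - dotp (w k) y ∈ P := by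
      intro k hk1 hk2 x hx y hy
      rw [hP]
      refine Finset.mem_image.mpr ⟨⟨k, x, y⟩, ?_, rfl⟩
      simp [hQf, Set.Finite.mem_toFinset, hx, hy, hk1, hk2]
    set Ppos : Finset ℝ := P.filter (fun d => 0 < d) with hPpos
    have hposmem : ∀ d ∈ Ppos, 0 < d := by
      intro d hd; rw [hPpos, Finset.mem_filter] at hd; exact hd.2
    refine ⟨if h : Ppos.Nonempty then Ppos.min' h else 1, P.max' hPne, ?_, ?_, ?_, ?_⟩
    · split_ifs with h
      · exact hposmem _ (Ppos.min'_mem h)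
      · norm_num
    · obtain ⟨q, hq⟩ := hQne
      have h0 : dotp (w 1) q - dotp (w 1) q ∈ P := hmemP 1 le_rfl hℓ q hq q hq
      have := Finset.le_max' P _ h0
      linarith
    · intro k hk1 hk2 x hx y hy hlt
      have hmem : dotp (w k) x - dotp (w k) y ∈ Ppos := by
        rw [hPpos, Finset.mem_filter]
        exact ⟨hmemP k hk1 hk2 x hx y hy, by linarith⟩
      rw [dif_pos ⟨_, hmem⟩]
      exact Finset.min'_le _ _ hmem
    · intro k hk1 hk2 x hx y hy
      exact Finset.le_max' P _ (hmemP k hk1 hk2 x hx y hy)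
  -- Step 2: choose t
  obtain ⟨t, htpos, ht1, htγ, hgap⟩ :
      ∃ t : ℝ, 0 < t ∧ t < 1 ∧ (∀ j, 2 ≤ j → j ≤ ℓ → t < γ j) ∧ (ℓ : ℝ) * t * C < ε := by
    set G : Finset ℝ := (Finset.Icc 2 ℓ).image γ with hG
    set A : ℝ := if h : G.Nonempty then G.min' h else 1 with hA
    have hApos : 0 < A := by
      rw [hA]; split_ifs with h
      · obtain ⟨j, hj, hje⟩ := Finset.mem_image.mp (G.min'_mem h)
        rw [Finset.mem_Icc] at hj
        rw [← hje]; exact hγ j hj.1 hj.2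
      · norm_num
    have hAle : ∀ j, 2 ≤ j → j ≤ ℓ → A ≤ γ j := by
      intro j hj1 hj2
      have hmem : γ j ∈ G := Finset.mem_image_of_mem γ (Finset.mem_Icc.mpr ⟨hj1, hj2⟩)
      rw [hA, dif_pos ⟨_, hmem⟩]
      exact Finset.min'_le _ _ hmem
    have hℓR : (0 : ℝ) < ℓ := by exact_mod_cast hℓ
    have hCℓpos : 0 < (C + 1) * (ℓ : ℝ) := by positivity
    set B : ℝ := ε / ((C + 1) * ℓ) with hB
    have hBpos : 0 < B := div_pos hεpos hCℓpos
    refine ⟨min (min A B) 1 / 2, by positivity, ?_, ?_, ?_⟩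
    · have h1 : min (min A B) 1 ≤ 1 := min_le_right _ _
      have h2 : 0 < min (min A B) 1 := by positivity
      linarith
    · intro j hj1 hj2
      have h1 : min (min A B) 1 ≤ A := le_trans (min_le_left _ _) (min_le_left _ _)
      have h2 : 0 < min (min A B) 1 := by positivity
      have := hAle j hj1 hj2
      linarith
    · have htB : min (min A B) 1 / 2 < B := by
        have h1 : min (min A B) 1 ≤ B := le_trans (min_le_left _ _) (min_le_right _ _)
        have h2 : 0 < min (min A B) 1 := by positivity
        linarith
      have h2 : B * ((C + 1) * ℓ) = ε := by rw [hB]; field_simp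
      have h3 : 0 < min (min A B) 1 / 2 := by positivity
      nlinarith
  refine ⟨fun j => t ^ j, fun j hj1 hj2 => pow_pos htpos j, ?_, ?_⟩
  · intro j hj1 hj2
    obtain ⟨i, hi⟩ : ∃ i, j = i + 1 := ⟨j - 1, by omega⟩
    subst hi
    simp only [Nat.add_sub_cancel, pow_succ]
    rw [mul_comm (γ (i + 1))]
    exact mul_lt_mul_of_pos_left (htγ (i + 1) hj1 hj2) (pow_pos htpos i)
  -- key strict inequality
  have key : ∀ x ∈ superSeq w Q ℓ, ∀ y ∈ Q, y ∉ superSeq w Q ℓ →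
      ∑ j ∈ Finset.Icc 1 ℓ, t ^ j * dotp (w j) y <
        ∑ j ∈ Finset.Icc 1 ℓ, t ^ j * dotp (w j) x := by
    intro x hx y hyQ hyn
    have hxQ : x ∈ Q := superSeq_subset w Q ℓ hx
    have hex : ∃ j, y ∉ superSeq w Q j := ⟨ℓ, hyn⟩
    set k := Nat.find hex with hk
    have hky : y ∉ superSeq w Q k := Nat.find_spec hex
    have hk0 : k ≠ 0 := fun h => hky (by rwa [h])
    obtain ⟨m, hm⟩ : ∃ m, k = m + 1 := ⟨k - 1, by omega⟩
    have hym : y ∈ superSeq w Q m := by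
      by_contra h
      have h2 : k ≤ m := Nat.find_le h
      omega
    have hkℓ : k ≤ ℓ := Nat.find_le hyn
    have hk1 : 1 ≤ k := by omega
    have hxk : x ∈ superSeq w Q k := superSeq_subset_of_le w Q hkℓ hx
    have hdk : dotp (w k) y < dotp (w k) x := by
      rw [hm] at hky
      have hno : ¬ (∀ z ∈ superSeq w Q m, dotp (w (m + 1)) z ≤ dotp (w (m + 1)) y) :=
        fun h => hky ⟨hym, h⟩
      push_neg at hno
      obtain ⟨z, hz, hzgt⟩ := hno
      have hxm : x ∈ superSeq w Q (m + 1) := by rwa [hm] at hxk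
      have := hxm.2 z hz
      rw [hm]
      linarith
    have hεk : ε ≤ dotp (w k) x - dotp (w k) y := hεle k hk1 hkℓ x hxQ y hyQ hdk
    rw [← sub_pos, ← Finset.sum_sub_distrib]
    have hsplit : Finset.Icc 1 ℓ = Finset.Ico 1 k ∪ Finset.Icc k ℓ := by
      ext j
      simp only [Finset.mem_Icc, Finset.mem_Ico, Finset.mem_union]
      omega
    have hdisj : Disjoint (Finset.Ico 1 k) (Finset.Icc k ℓ) := by
      simp only [Finset.disjoint_left, Finset.mem_Ico, Finset.mem_Icc]
      omega
    rw [hsplit, Finset.sum_union hdisj]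
    have hfirst : ∑ j ∈ Finset.Ico 1 k,
        (t ^ j * dotp (w j) x - t ^ j * dotp (w j) y) = 0 := by
      apply Finset.sum_eq_zero
      intro j hj
      rw [Finset.mem_Ico] at hj
      obtain ⟨i, hi⟩ : ∃ i, j = i + 1 := ⟨j - 1, by omega⟩
      have hjm : j ≤ m := by omega
      have hxj : x ∈ superSeq w Q j :=
        superSeq_subset_of_le w Q (le_trans hjm (by omega)) hx
      have hyj : y ∈ superSeq w Q j := superSeq_subset_of_le w Q hjm hym
      rw [hi] at hxj hyj ⊢
      rw [superSeq_dotp_eq w Q hxj hyj]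
      ring
    have hIcck : Finset.Icc k ℓ = insert k (Finset.Icc (k + 1) ℓ) := by
      ext j
      simp only [Finset.mem_Icc, Finset.mem_insert]
      omega
    rw [hfirst, hIcck, Finset.sum_insert (by simp [Finset.mem_Icc])]
    have htail : ∀ j ∈ Finset.Icc (k + 1) ℓ,
        -(t ^ (k + 1) * C) ≤ t ^ j * dotp (w j) x - t ^ j * dotp (w j) y := by
      intro j hj
      rw [Finset.mem_Icc] at hj
      have h1 : dotp (w j) y - dotp (w j) x ≤ C := hCle j (by omega) hj.2 y hyQ x hxQ
      have h2 : t ^ j ≤ t ^ (k + 1) :=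
        pow_le_pow_of_le_one (le_of_lt htpos) (le_of_lt ht1) hj.1
      have h3 : 0 < t ^ j := pow_pos htpos j
      nlinarith
    have hcard : ((Finset.Icc (k + 1) ℓ).card : ℝ) ≤ (ℓ : ℝ) := by
      have : (Finset.Icc (k + 1) ℓ).card ≤ ℓ := by rw [Nat.card_Icc]; omega
      exact_mod_cast this
    have hsum_tail : -((ℓ : ℝ) * (t ^ (k + 1) * C)) ≤
        ∑ j ∈ Finset.Icc (k + 1) ℓ, (t ^ j * dotp (w j) x - t ^ j * dotp (w j) y) := by
      have h1 := Finset.card_nsmul_le_sum (Finset.Icc (k + 1) ℓ)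
        (fun j => t ^ j * dotp (w j) x - t ^ j * dotp (w j) y) (-(t ^ (k + 1) * C)) htail
      rw [nsmul_eq_mul] at h1
      have h4 : 0 ≤ t ^ (k + 1) * C := by positivity
      nlinarith
    have hmain : 0 < t ^ k * ε - (ℓ : ℝ) * (t ^ (k + 1) * C) := by
      have h1 : 0 < t ^ k := pow_pos htpos k
      have h2 : t ^ (k + 1) = t ^ k * t := by ring
      nlinarith [mul_pos h1 (show (0:ℝ) < ε - ↑ℓ * t * C by linarith)]
    have hk_term : t ^ k * ε ≤ t ^ k * dotp (w k) x - t ^ k * dotp (w k) y := by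
      have h1 : 0 < t ^ k := pow_pos htpos k
      nlinarith
    linarith
  ext x
  constructor
  · rintro ⟨hxQ, hxmax⟩
    by_contra hxn
    obtain ⟨z, hz⟩ := superSeq_nonempty w Q hQfin hQne ℓ
    have hzQ : z ∈ Q := superSeq_subset w Q ℓ hz
    have h1 := hxmax z hzQ
    rw [dotp_sum_left, dotp_sum_left] at h1
    have h2 := key z hz x hxQ hxn
    linarith
  · intro hx
    have hxQ : x ∈ Q := superSeq_subset w Q ℓ hx
    refine ⟨hxQ, ?_⟩
    intro y hyQ
    rw [dotp_sum_left, dotp_sum_left]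
    by_cases hy : y ∈ superSeq w Q ℓ
    · apply le_of_eq
      apply Finset.sum_congr rfl
      intro j hj
      rw [Finset.mem_Icc] at hj
      obtain ⟨i, hi⟩ : ∃ i, j = i + 1 := ⟨j - 1, by omega⟩
      have hxj : x ∈ superSeq w Q j := superSeq_subset_of_le w Q hj.2 hx
      have hyj : y ∈ superSeq w Q j := superSeq_subset_of_le w Q hj.2 hy
      rw [hi] at hxj hyj ⊢
      rw [superSeq_dotp_eq w Q hyj hxj]
    · exact le_of_lt (key x hx y hyQ hy)
end

section
/- Birch's theorem: Let H ⊆ ℝ^m be a linear subspace and α, p ∈ ℝ^m_{>0}. Then the relative interior of the polyhedron P = (p + H) ∩ ℝ^m_{≥0} intersects the set {α * θ^w : θ ∈ ℝ_{>0}, w ∈ H^⊥} in exactly one point, where α * θ^w denotes the vector with coordinates α_i θ^{w_i}. -/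
/-!
The point is `α * exp v`, where `v` minimises the coercive convex potential
`∑ i, (α i * exp (v i) - p i * v i)` over `Hᗮ`: its gradient `α * exp v - p` is orthogonal to
`Hᗮ`, i.e. lies in `H`. For uniqueness, two such points `y, z` have `y - z ∈ H` and
`log y - log z ∈ Hᗮ`, so `∑ i, (y i - z i) * (log (y i) - log (z i)) = 0`; since `log` is strictly
increasing every term is positive unless `y i = z i`.
-/

open Real Filter RealInnerProductSpace

lemma mul_abs_sub_le_mul_exp_sub_mul {a : ℝ} (ha : 0 < a) (b t : ℝ) :
    b * |t| - 2 * b ^ 2 / a ≤ a * exp t - b * t := by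
  have hc : 0 ≤ 2 * b ^ 2 / a := by positivity
  rcases le_or_gt t 0 with ht | ht
  · rw [abs_of_nonpos ht]
    linarith [mul_pos ha (exp_pos t)]
  · rw [abs_of_pos ht]
    have hexp := mul_le_mul_of_nonneg_left (quadratic_le_exp_of_nonneg ht.le) ha.le
    have hc' : 2 * b ^ 2 / a * a = 2 * b ^ 2 := by field_simp
    nlinarith [sq_nonneg (a * t - 2 * b), mul_pos ha ht]

lemma mul_log_sub_log_pos {a b : ℝ} (ha : 0 < a) (hb : 0 < b) (hab : a ≠ b) :
    0 < (a - b) * (log a - log b) := by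
  rcases hab.lt_or_gt with h | h
  · exact mul_pos_of_neg_of_neg (sub_neg.2 h) (sub_neg.2 (log_lt_log ha h))
  · exact mul_pos (sub_pos.2 h) (sub_pos.2 (log_lt_log hb h))

lemma mul_log_sub_log_nonneg {a b : ℝ} (ha : 0 < a) (hb : 0 < b) :
    0 ≤ (a - b) * (log a - log b) := by
  rcases eq_or_ne a b with rfl | hab
  · simp
  · exact (mul_log_sub_log_pos ha hb hab).le

variable {ι : Type*}

section
variable {α x w : EuclideanSpace ℝ ι} {θ : ℝ}

lemma pos_of_eq_mul_rpow (hα : ∀ i, 0 < α i) (hθ : 0 < θ)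
    (hx : x.ofLp = fun i => α i * θ ^ w i) (i : ι) : 0 < x i := by
  rw [hx]
  exact mul_pos (hα i) (rpow_pos_of_pos hθ _)

lemma log_eq_add_of_eq_mul_rpow (hα : ∀ i, 0 < α i) (hθ : 0 < θ)
    (hx : x.ofLp = fun i => α i * θ ^ w i) (i : ι) : log (x i) = log (α i) + (log θ • w) i := by
  rw [hx, log_mul (hα i).ne' (rpow_pos_of_pos hθ _).ne', log_rpow hθ, PiLp.smul_apply,
    smul_eq_mul, mul_comm]

end

variable [Fintype ι]

lemma EuclideanSpace.norm_le_sum_abs (v : EuclideanSpace ℝ ι) : ‖v‖ ≤ ∑ i, |v i| := by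
  rw [EuclideanSpace.norm_eq, sqrt_le_iff]
  exact ⟨Finset.sum_nonneg fun i _ => abs_nonneg _,
    Finset.sum_sq_le_sq_sum_of_nonneg fun i _ => norm_nonneg _⟩

lemma eq_of_sub_mem_of_log_sub_log_mem_orthogonal {H : Submodule ℝ (EuclideanSpace ℝ ι)}
    {y z u : EuclideanSpace ℝ ι} (hy : ∀ i, 0 < y i) (hz : ∀ i, 0 < z i) (hyz : y - z ∈ H)
    (hu : u ∈ Hᗮ) (hlog : ∀ i, u i = log (y i) - log (z i)) : y = z := by
  by_contra hne
  obtain ⟨i, hi⟩ : ∃ i, y i ≠ z i := by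
    by_contra! h
    exact hne (PiLp.ext h)
  have hpos : 0 < ∑ i, (y i - z i) * (log (y i) - log (z i)) :=
    Finset.sum_pos' (fun j _ => mul_log_sub_log_nonneg (hy j) (hz j))
      ⟨i, Finset.mem_univ i, mul_log_sub_log_pos (hy i) (hz i) hi⟩
  have hzero : ⟪u, y - z⟫ = 0 := Submodule.inner_left_of_mem_orthogonal hyz hu
  simp only [PiLp.inner_apply, PiLp.sub_apply, hlog, RCLike.inner_apply, conj_trivial] at hzero
  exact hpos.ne' hzero

lemma eq_of_sub_mem_of_eq_mul_rpow {H : Submodule ℝ (EuclideanSpace ℝ ι)}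
    {α y z : EuclideanSpace ℝ ι} (hα : ∀ i, 0 < α i) (hyz : y - z ∈ H)
    (hy : ∃ θ : ℝ, 0 < θ ∧ ∃ w ∈ Hᗮ, y.ofLp = fun i => α i * θ ^ w i)
    (hz : ∃ θ : ℝ, 0 < θ ∧ ∃ w ∈ Hᗮ, z.ofLp = fun i => α i * θ ^ w i) : y = z := by
  obtain ⟨θ₁, hθ₁, w₁, hw₁, hy⟩ := hy
  obtain ⟨θ₂, hθ₂, w₂, hw₂, hz⟩ := hz
  refine eq_of_sub_mem_of_log_sub_log_mem_orthogonal (pos_of_eq_mul_rpow hα hθ₁ hy)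
    (pos_of_eq_mul_rpow hα hθ₂ hz) hyz
    (Hᗮ.sub_mem (Hᗮ.smul_mem (log θ₁) hw₁) (Hᗮ.smul_mem (log θ₂) hw₂)) fun i => ?_
  rw [log_eq_add_of_eq_mul_rpow hα hθ₁ hy, log_eq_add_of_eq_mul_rpow hα hθ₂ hz, PiLp.sub_apply]
  ring

noncomputable def birchPotential (α p v : EuclideanSpace ℝ ι) : ℝ :=
  ∑ i, (α i * exp (v i) - p i * v i)

lemma continuous_birchPotential (α p : EuclideanSpace ℝ ι) : Continuous (birchPotential α p) := by
  unfold birchPotential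
  fun_prop

lemma hasDerivAt_birchPotential_add_smul (α p v u : EuclideanSpace ℝ ι) :
    HasDerivAt (fun t : ℝ => birchPotential α p (v + t • u))
      (∑ i, (α i * exp (v i) - p i) * u i) 0 := by
  unfold birchPotential
  refine HasDerivAt.fun_sum fun i _ => ?_
  have hline : HasDerivAt (fun t : ℝ => (v + t • u) i) (u i) 0 := by
    simpa using (hasDerivAt_mul_const (u i)).const_add (v i)
  convert (hline.exp.const_mul (α i)).fun_sub (hline.const_mul (p i)) using 1
  simp only [zero_smul, add_zero]
  ring

section
variable {α p : EuclideanSpace ℝ ι}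

lemma sum_mul_abs_sub_le_birchPotential (hα : ∀ i, 0 < α i) (v : EuclideanSpace ℝ ι) :
    ∑ i, p i * |v i| - ∑ i, 2 * p i ^ 2 / α i ≤ birchPotential α p v := by
  rw [← Finset.sum_sub_distrib]
  exact Finset.sum_le_sum fun i _ => mul_abs_sub_le_mul_exp_sub_mul (hα i) (p i) (v i)

lemma tendsto_birchPotential_cocompact (hα : ∀ i, 0 < α i) (hp : ∀ i, 0 < p i) :
    Tendsto (birchPotential α p) (cocompact (EuclideanSpace ℝ ι)) atTop := by
  obtain ⟨c, hc, hcp⟩ : ∃ c > 0, ∀ i, c ≤ p i := by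
    rcases isEmpty_or_nonempty ι with hι | hι
    · exact ⟨1, one_pos, isEmptyElim⟩
    · obtain ⟨j, -, hj⟩ := Finset.univ.exists_min_image p Finset.univ_nonempty
      exact ⟨p j, hp j, fun i => hj i (Finset.mem_univ i)⟩
  have hlower : ∀ v : EuclideanSpace ℝ ι,
      c * ‖v‖ - ∑ i, 2 * p i ^ 2 / α i ≤ birchPotential α p v := fun v =>
    calc c * ‖v‖ - ∑ i, 2 * p i ^ 2 / α i
        ≤ ∑ i, p i * |v i| - ∑ i, 2 * p i ^ 2 / α i := by
          gcongr
          calc c * ‖v‖ ≤ c * ∑ i, |v i| := by gcongr; exact EuclideanSpace.norm_le_sum_abs v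
            _ ≤ ∑ i, p i * |v i| := by
              rw [Finset.mul_sum]; gcongr with i; exact hcp i
      _ ≤ birchPotential α p v := sum_mul_abs_sub_le_birchPotential hα v
  exact tendsto_atTop_mono hlower <| tendsto_atTop_add_const_right _ _ <|
    tendsto_norm_cocompact_atTop.const_mul_atTop hc

lemma exists_isMinOn_birchPotential (hα : ∀ i, 0 < α i) (hp : ∀ i, 0 < p i)
    {s : Set (EuclideanSpace ℝ ι)} (hs : IsClosed s) (hne : s.Nonempty) : ∃ v ∈ s, IsMinOn (birchPotential α p) s v := by
  obtain ⟨v₀, hv₀⟩ := hne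
  refine (continuous_birchPotential α p).continuousOn.exists_isMinOn' hs hv₀ ?_
  exact ((tendsto_birchPotential_cocompact hα hp).eventually_ge_atTop _).filter_mono inf_le_left

lemma sub_mem_orthogonal_of_isMinOn_birchPotential {v : EuclideanSpace ℝ ι}
    {K : Submodule ℝ (EuclideanSpace ℝ ι)} (hv : v ∈ K)
    (hmin : IsMinOn (birchPotential α p) K v) :
    WithLp.toLp 2 (fun i => α i * exp (v i)) - p ∈ Kᗮ := by
  refine (Submodule.mem_orthogonal _ _).2 fun u hu => ?_
  have hlocal : IsLocalMin (fun t : ℝ => birchPotential α p (v + t • u)) 0 :=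
    Eventually.of_forall fun t => by
      simpa using hmin (K.add_mem hv (K.smul_mem t hu))
  rw [← hlocal.hasDerivAt_eq_zero (hasDerivAt_birchPotential_add_smul α p v u),
    PiLp.inner_apply]
  simp

end

/-- Birch's theorem: for a linear subspace `H ⊆ ℝ^m` and positive
vectors `α, p`, the relative interior of `P = (p + H) ∩ ℝ^m_{≥0}` meets the toric
pencil `{α * θ^w : θ > 0, w ∈ H^⊥}` in exactly one point. -/
theorem birch_theorem {m : ℕ} (H : Submodule ℝ (EuclideanSpace ℝ (Fin m)))
    (α p : EuclideanSpace ℝ (Fin m)) (hα : ∀ i, 0 < α i) (hp : ∀ i, 0 < p i) :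
    ∃! x : EuclideanSpace ℝ (Fin m),
      (∀ i, 0 < x i) ∧ x - p ∈ H ∧
      ∃ θ : ℝ, 0 < θ ∧ ∃ w : EuclideanSpace ℝ (Fin m), w ∈ Hᗮ ∧
        x = fun i => α i * θ ^ (w i) := by
  obtain ⟨v, hv, hmin⟩ := exists_isMinOn_birchPotential hα hp
    (Submodule.closed_of_finiteDimensional Hᗮ) ⟨0, Hᗮ.zero_mem⟩
  have hxp := sub_mem_orthogonal_of_isMinOn_birchPotential hv hmin
  rw [H.orthogonal_orthogonal] at hxp
  have hx : ∃ θ : ℝ, 0 < θ ∧ ∃ w ∈ Hᗮ,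
      (WithLp.toLp 2 fun i => α i * exp (v i)).ofLp = fun i => α i * θ ^ w i :=
    ⟨exp 1, exp_pos 1, v, hv, by simp only [exp_one_rpow]⟩
  refine ⟨_, ⟨fun i => mul_pos (hα i) (exp_pos _), hxp, hx⟩, fun y hy => ?_⟩
  exact eq_of_sub_mem_of_eq_mul_rpow hα (by simpa using H.sub_mem hy.2.1 hxp) hy.2.2 hx
end

section
/- Let A be a real d × m matrix with columns a_1, …, a_m, and let α, p ∈ ℝ^m_{>0}. Then the image of the monomial map f_{A,α} : ℝ^d_{>0} → ℝ^m_{>0}, Θ ↦ (α_1 Θ^{a_1}, …, α_m Θ^{a_m}) (where Θ^{a_j} = Θ_1^{(a_j)_1} ⋯ Θ_d^{(a_j)_d}), intersects the polyhedron {q ∈ ℝ^m_{≥0} : A q = A p} in exactly one point. -/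
/-!
In log coordinates `y = x ᵥ* A` the image of the monomial map is `{α * exp y : y ∈ row space of A}`.
The function `Φ y = ∑ i, (α i * exp (y i) - p i * y i)` is coercive, so it attains its minimum on
the row space; there its gradient `α * exp y - p` is orthogonal to the row space, which says
`A *ᵥ (α * exp y) = A *ᵥ p`. For uniqueness, if `α * exp y₁` and `α * exp y₂` have the same image
under `A`, their difference is orthogonal to `y₁ - y₂`, which lies in the row space; since `exp` is
strictly increasing this forces `y₁ = y₂`.
-/

open Finset Filter Matrix Real

theorem sub_mul_log_div_le_mul_exp_sub_mul {a p : ℝ} (ha : 0 < a) (hp : 0 < p) (t : ℝ) :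
    p - p * log (p / a) ≤ a * exp t - p * t := by
  -- the left side is the value at the minimiser `t = log (p / a)`
  have h := add_one_le_exp (t - log (p / a))
  rw [exp_sub, exp_log (div_pos hp ha), div_div_eq_mul_div, le_div_iff₀ hp] at h
  nlinarith

theorem tendsto_mul_exp_sub_mul_cocompact {a p : ℝ} (ha : 0 < a) (hp : 0 < p) :
    Tendsto (fun t => a * exp t - p * t) (cocompact ℝ) atTop := by
  rw [cocompact_eq_atBot_atTop, tendsto_sup]
  constructor
  · refine tendsto_atTop_mono (fun t => ?_) ((tendsto_neg_atBot_atTop).const_mul_atTop hp)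
    nlinarith [exp_pos t]
  · refine tendsto_atTop_mono (fun t => ?_)
      (tendsto_atTop_add_const_right _ (2 * p - 2 * p * log (2 * p / a))
        (tendsto_id.const_mul_atTop hp))
    have := sub_mul_log_div_le_mul_exp_sub_mul ha (by positivity : 0 < 2 * p) t
    simp only [id]
    linarith

theorem tendsto_sum_apply_cocompact_atTop {ι : Type*} [Fintype ι] {X : ι → Type*}
    [∀ i, TopologicalSpace (X i)] {f : ∀ i, X i → ℝ}
    (hf : ∀ i, Tendsto (f i) (cocompact (X i)) atTop) (hb : ∀ i, BddBelow (Set.range (f i))) :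
    Tendsto (fun x => ∑ i, f i (x i)) (cocompact (∀ i, X i)) atTop := by
  classical
  choose b hb using hb
  rw [← coprodᵢ_cocompact, Filter.coprodᵢ, tendsto_iSup]
  intro i
  refine tendsto_atTop_mono (fun x => ?_)
    (tendsto_atTop_add_const_right _ (∑ j ∈ univ.erase i, b j) ((hf i).comp tendsto_comap))
  rw [← add_sum_erase _ _ (mem_univ i)]
  exact add_le_add_right (sum_le_sum fun j _ => hb j ⟨x j, rfl⟩) _

theorem hasFDerivAt_sum_apply {ι : Type*} [Fintype ι] {f : ι → ℝ → ℝ} {c y : ι → ℝ}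
    (hf : ∀ i, HasDerivAt (f i) (c i) (y i)) :
    HasFDerivAt (fun x => ∑ i, f i (x i))
      (∑ i, c i • ContinuousLinearMap.proj i : (ι → ℝ) →L[ℝ] ℝ) y := by
  refine HasFDerivAt.fun_sum fun i _ => ?_
  refine ((hf i).hasFDerivAt.comp y (hasFDerivAt_apply (𝕜 := ℝ) i y)).congr_fderiv ?_
  ext v
  simp [mul_comm]

theorem IsMinOn.hasFDerivAt_apply_eq_zero {E : Type*} [NormedAddCommGroup E] [NormedSpace ℝ E]
    {f : E → ℝ} {f' : E →L[ℝ] ℝ} {V : Submodule ℝ E} {y : E} (hmin : IsMinOn f V y) (hy : y ∈ V)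
    (hf : HasFDerivAt f f' y) {v : E} (hv : v ∈ V) : f' v = 0 := by
  have hloc : IsLocalMin (f ∘ V.subtype) ⟨y, hy⟩ :=
    IsMinOn.isLocalMin (s := Set.univ) (fun z _ => hmin z.2) Filter.univ_mem
  simpa using congr($(hloc.hasFDerivAt_eq_zero (hf.comp _ V.subtypeL.hasFDerivAt)) ⟨v, hv⟩)

theorem StrictMono.sub_mul_sub_pos {R : Type*} [Ring R] [LinearOrder R] [IsStrictOrderedRing R]
    {f : R → R} (hf : StrictMono f) {a b : R} (hab : a ≠ b) : 0 < (f a - f b) * (a - b) := by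
  rcases hab.lt_or_gt with h | h
  · exact mul_pos_of_neg_of_neg (sub_neg.2 (hf h)) (sub_neg.2 h)
  · exact mul_pos (sub_pos.2 (hf h)) (sub_pos.2 h)

theorem eq_of_dotProduct_sub_eq_zero {ι R : Type*} [Fintype ι] [Ring R] [LinearOrder R]
    [IsStrictOrderedRing R] {f : ι → R → R} (hf : ∀ i, StrictMono (f i)) {y z : ι → R}
    (h : (fun i => f i (y i) - f i (z i)) ⬝ᵥ (y - z) = 0) : y = z := by
  by_contra hne
  obtain ⟨i, hi⟩ := Function.ne_iff.1 hne
  refine h.not_gt (sum_pos' (fun j _ => ?_) ⟨i, mem_univ i, (hf i).sub_mul_sub_pos hi⟩)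
  rcases eq_or_ne (y j) (z j) with hj | hj
  · simp [hj]
  · exact ((hf j).sub_mul_sub_pos hj).le

theorem Matrix.mulVec_eq_zero_of_forall_dotProduct_vecMul {ι κ R : Type*} [Fintype ι] [Fintype κ]
    [CommRing R] [LinearOrder R] [IsStrictOrderedRing R] {A : Matrix κ ι R} {w : ι → R}
    (h : ∀ x, w ⬝ᵥ x ᵥ* A = 0) : A *ᵥ w = 0 := by
  rw [← dotProduct_self_eq_zero, dotProduct_mulVec, dotProduct_comm]
  exact h _

theorem prod_rpow_eq_exp_vecMul {ι κ : Type*} [Fintype ι] [Fintype κ] (A : Matrix κ ι ℝ)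
    {Θ : κ → ℝ} (hΘ : ∀ j, 0 < Θ j) (i : ι) :
    ∏ j, Θ j ^ A j i = exp (((fun j => log (Θ j)) ᵥ* A) i) := by
  simp only [vecMul, dotProduct, exp_sum]
  exact prod_congr rfl fun j _ => rpow_def_of_pos (hΘ j) _

theorem Matrix.exists_mulVec_mul_exp_vecMul_eq {ι κ : Type*} [Fintype ι] [Fintype κ]
    (A : Matrix κ ι ℝ) {α p : ι → ℝ} (hα : ∀ i, 0 < α i) (hp : ∀ i, 0 < p i) :
    ∃ x : κ → ℝ, A *ᵥ (fun i => α i * exp ((x ᵥ* A) i)) = A *ᵥ p := by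
  set Φ : (ι → ℝ) → ℝ := fun y => ∑ i, (α i * exp (y i) - p i * y i)
  set V := LinearMap.range A.vecMulLinear
  have hΦ : Tendsto Φ (cocompact _) atTop :=
    tendsto_sum_apply_cocompact_atTop (fun i => tendsto_mul_exp_sub_mul_cocompact (hα i) (hp i))
      fun i => ⟨_, Set.forall_mem_range.2 (sub_mul_log_div_le_mul_exp_sub_mul (hα i) (hp i))⟩
  obtain ⟨y, ⟨x, rfl⟩, hmin⟩ := (show Continuous Φ by fun_prop).continuousOn.exists_isMinOn'
    V.closed_of_finiteDimensional V.zero_mem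
    ((hΦ.eventually_ge_atTop (Φ 0)).filter_mono inf_le_left)
  have hderiv : HasFDerivAt Φ
      (∑ i, (α i * exp ((x ᵥ* A) i) - p i) • ContinuousLinearMap.proj i) (x ᵥ* A) :=
    hasFDerivAt_sum_apply (f := fun i t => α i * exp t - p i * t) (y := x ᵥ* A) fun i => by
      simpa using
        ((hasDerivAt_exp _).const_mul (α i)).fun_sub ((hasDerivAt_id' _).const_mul (p i))
  refine ⟨x, sub_eq_zero.1 ?_⟩
  rw [← mulVec_sub]
  refine mulVec_eq_zero_of_forall_dotProduct_vecMul fun x' => ?_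
  simpa [dotProduct] using hmin.hasFDerivAt_apply_eq_zero ⟨x, rfl⟩ hderiv ⟨x', rfl⟩

theorem Matrix.vecMul_eq_of_mulVec_mul_exp_vecMul_eq {ι κ : Type*} [Fintype ι] [Fintype κ]
    (A : Matrix κ ι ℝ) {α : ι → ℝ} (hα : ∀ i, 0 < α i) {x₁ x₂ : κ → ℝ}
    (h : A *ᵥ (fun i => α i * exp ((x₁ ᵥ* A) i)) = A *ᵥ (fun i => α i * exp ((x₂ ᵥ* A) i))) :
    x₁ ᵥ* A = x₂ ᵥ* A := by
  refine eq_of_dotProduct_sub_eq_zero (f := fun i t => α i * exp t)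
    (fun i => exp_strictMono.const_mul (hα i)) ?_
  change ((fun i => α i * exp ((x₁ ᵥ* A) i)) - fun i => α i * exp ((x₂ ᵥ* A) i)) ⬝ᵥ _ = 0
  rw [dotProduct_comm, ← sub_vecMul, ← dotProduct_mulVec, mulVec_sub, h, sub_self, dotProduct_zero]

/-- Birch's theorem, algebraic-statistics form: the image of the
monomial map `Θ ↦ (α_i ∏_j Θ_j ^ A j i)_i` over positive `Θ` meets the polyhedron
`{q ≥ 0 : A q = A p}` in exactly one point. -/
theorem birch_theorem_monomial_map {d m : ℕ} (A : Matrix (Fin d) (Fin m) ℝ)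
    (α p : Fin m → ℝ) (hα : ∀ i, 0 < α i) (hp : ∀ i, 0 < p i) :
    ∃! q : Fin m → ℝ,
      (∀ i, 0 ≤ q i) ∧ A.mulVec q = A.mulVec p ∧
      ∃ Θ : Fin d → ℝ, (∀ j, 0 < Θ j) ∧
        q = fun i => α i * ∏ j, Θ j ^ (A j i) := by
  obtain ⟨x, hx⟩ := A.exists_mulVec_mul_exp_vecMul_eq hα hp
  refine ⟨fun i => α i * exp ((x ᵥ* A) i), ⟨fun i => (mul_pos (hα i) (exp_pos _)).le, hx,
    fun j => exp (x j), fun j => exp_pos _, ?_⟩, ?_⟩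
  · simp only [prod_rpow_eq_exp_vecMul A fun j => exp_pos (x j), log_exp]
  · rintro q ⟨-, hq, Θ, hΘ, rfl⟩
    simp only [prod_rpow_eq_exp_vecMul A hΘ] at hq ⊢
    rw [A.vecMul_eq_of_mulVec_mul_exp_vecMul_eq hα (hq.trans hx.symm)]
end
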